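/- Let V(x;θ) = ∏_{j=1}^L (Ũ(x) ⊗ R_X(θⱼ)) with Ũ(x) the ancilla-controlled version of U(x) and L < 2^t. Then for M = Z₁ ⊗ I ⊗ Z, the function f_θ(x) = ⟨0|V†(x;θ) M V(x;θ)|0⟩ equals Q(x)·cos(Σⱼθⱼ), where Q(x) = ⟨0|U†(x) Z₁ U(x)|0⟩. -/
import Mathlib


open Matrix Kronecker

/-- `Ũ(x)` applies `U(x)` on the work register conditioned on the `t`-qubit
ancilla being `|0⟩`, and increments the ancilla modulo `2^t`. -/
def ctrlU {d : ℕ} (t : ℕ) (U : Matrix (Fin d) (Fin d) ℂ) :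
    Matrix (Fin d × ZMod (2 ^ t)) (Fin d × ZMod (2 ^ t)) ℂ :=
  fun p q =>
    (if q.2 = 0 then U p.1 q.1 else if p.1 = q.1 then 1 else 0) *
      (if p.2 = q.2 + 1 then 1 else 0)

/-- The single-qubit rotation `R_X(θ) = cos(θ/2)·I − i·sin(θ/2)·X`. -/
noncomputable def RX (θ : ℝ) : Matrix (Fin 2) (Fin 2) ℂ :=
  (Real.cos (θ / 2) : ℂ) • (1 : Matrix (Fin 2) (Fin 2) ℂ) -
    (Complex.I * (Real.sin (θ / 2) : ℂ)) • !![0, 1; 1, 0]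

section Aux

lemma kron_mulVec {m n : Type*} [Fintype m] [Fintype n]
    (A : Matrix m m ℂ) (B : Matrix n n ℂ) (g : m → ℂ) (h : n → ℂ) :
    (A ⊗ₖ B).mulVec (fun p => g p.1 * h p.2) =
      fun p => A.mulVec g p.1 * B.mulVec h p.2 := by
  funext p
  simp only [Matrix.mulVec, dotProduct, Matrix.kroneckerMap_apply,
    Fintype.sum_prod_type, Finset.sum_mul_sum]
  exact Finset.sum_congr rfl fun q _ => Finset.sum_congr rfl fun t _ => by ring

lemma dot_factor {m n : Type*} [Fintype m] [Fintype n] (g g' : m → ℂ) (h h' : n → ℂ) :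
    star (fun p : m × n => g p.1 * h p.2) ⬝ᵥ (fun p => g' p.1 * h' p.2) =
      (star g ⬝ᵥ g') * (star h ⬝ᵥ h') := by
  simp only [dotProduct, Fintype.sum_prod_type, Finset.sum_mul_sum,
    Pi.star_apply, star_mul']
  exact Finset.sum_congr rfl fun q _ => Finset.sum_congr rfl fun t _ => by ring

lemma RX_zero : RX 0 = 1 := by simp [RX]

lemma RX_add (a b : ℝ) : RX a * RX b = RX (a + b) := by
  have hc : ((a + b) / 2) = a / 2 + b / 2 := by ring
  ext i j
  fin_cases i <;> fin_cases j <;>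
    · simp [RX, Matrix.mul_apply, Fin.sum_univ_two, Matrix.one_apply, hc,
        Real.cos_add, Real.sin_add, Complex.ext_iff]
      ring_nf
      trivial

lemma prod_RX : ∀ (L : ℕ) (θ : Fin L → ℝ),
    (List.ofFn fun j : Fin L => RX (θ j)).prod = RX (∑ j, θ j) := by
  intro L
  induction L with
  | zero => intro θ; simp [RX_zero]
  | succ n ih =>
    intro θ
    rw [List.ofFn_succ, List.prod_cons, ih, RX_add, Fin.sum_univ_succ]

lemma kron_list_prod {m n : Type*} [Fintype m] [Fintype n] [DecidableEq m] [DecidableEq n]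
    (A : Matrix m m ℂ) :
    ∀ (l : List (Matrix n n ℂ)),
      (l.map fun B => A ⊗ₖ B).prod = (A ^ l.length) ⊗ₖ l.prod := by
  intro l
  induction l with
  | nil => simp [Matrix.one_kronecker_one]
  | cons B l ih =>
    simp only [List.map_cons, List.prod_cons, ih, List.length_cons,
      Matrix.mul_kronecker_mul, pow_succ']

lemma ctrl_step0 {d t : ℕ} (U : Matrix (Fin d) (Fin d) ℂ) (ψ : Fin d → ℂ) :
    (ctrlU t U).mulVec (fun p => ψ p.1 * if p.2 = 0 then 1 else 0) =
      fun p => U.mulVec ψ p.1 * if p.2 = 1 then 1 else 0 := by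
  funext p
  simp only [Matrix.mulVec, dotProduct, ctrlU, Fintype.sum_prod_type,
    mul_ite, mul_one, mul_zero, ite_mul, zero_mul]
  rw [Finset.sum_comm]
  simp [Finset.sum_ite_eq', Matrix.mulVec, dotProduct, Finset.mul_sum, mul_comm]

lemma ctrl_step {d t : ℕ} (U : Matrix (Fin d) (Fin d) ℂ) (φ : Fin d → ℂ)
    (k : ZMod (2 ^ t)) (hk : k ≠ 0) :
    (ctrlU t U).mulVec (fun p => φ p.1 * if p.2 = k then 1 else 0) =
      fun p => φ p.1 * if p.2 = k + 1 then 1 else 0 := by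
  funext p
  simp only [Matrix.mulVec, dotProduct, ctrlU, Fintype.sum_prod_type,
    mul_ite, mul_one, mul_zero, ite_mul, zero_mul]
  rw [Finset.sum_comm]
  simp [Finset.sum_ite_eq', hk]

lemma ctrl_pow {d t : ℕ} (U : Matrix (Fin d) (Fin d) ℂ) (ψ₀ : Fin d → ℂ) :
    ∀ k : ℕ, 1 ≤ k → k ≤ 2 ^ t →
      ((ctrlU t U) ^ k).mulVec (fun p => ψ₀ p.1 * if p.2 = 0 then 1 else 0) =
        fun p => U.mulVec ψ₀ p.1 * if p.2 = (k : ZMod (2 ^ t)) then 1 else 0 := by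
  intro k
  induction k with
  | zero => omega
  | succ n ih =>
    intro _ h2
    rcases Nat.eq_zero_or_pos n with rfl | hn
    · simpa using ctrl_step0 U ψ₀
    · have hk : (n : ZMod (2 ^ t)) ≠ 0 := by
        have : ¬ (2 ^ t ∣ n) := by
          intro hdvd
          have := Nat.le_of_dvd hn hdvd
          omega
        simpa [ZMod.natCast_eq_zero_iff] using this
      rw [pow_succ', ← Matrix.mulVec_mulVec, ih hn (by omega),
        ctrl_step U _ _ hk]
      push_cast
      rfl

lemma qubit_factor (Θ : ℝ) :
    star ((RX Θ).mulVec fun s : Fin 2 => if s = 0 then 1 else 0) ⬝ᵥ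
      ((!![1, 0; 0, -1] : Matrix (Fin 2) (Fin 2) ℂ).mulVec
        ((RX Θ).mulVec fun s : Fin 2 => if s = 0 then 1 else 0)) =
      (Real.cos Θ : ℂ) := by
  have hre : Real.cos Θ = Real.cos (Θ / 2) ^ 2 - Real.sin (Θ / 2) ^ 2 := by
    have h3 := Real.cos_two_mul (Θ / 2)
    have h4 := Real.sin_sq (Θ / 2)
    have h2 : 2 * (Θ / 2) = Θ := by ring
    rw [h2] at h3
    rw [h3, h4]; ring
  rw [hre]
  simp only [RX]
  generalize Real.cos (Θ / 2) = a
  generalize Real.sin (Θ / 2) = b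
  simp only [Matrix.mulVec, dotProduct, Fin.sum_univ_two,
    Matrix.sub_apply, Matrix.smul_apply, Matrix.one_apply, Matrix.cons_val',
    Matrix.cons_val_zero, Matrix.cons_val_one, Matrix.head_cons,
    Matrix.empty_val', Matrix.cons_val_fin_one, Pi.star_apply, smul_eq_mul]
  simp only [Fin.zero_eq_one_iff, Fin.one_eq_zero_iff, Nat.succ_ne_self,
    if_true, if_false, reduceIte, mul_one, mul_zero, Complex.star_def,
    Complex.ofReal_sub, Complex.ofReal_pow, map_sub, _root_.map_mul,
    Complex.conj_I, Complex.conj_ofReal, _root_.map_one, map_zero]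
  norm_num
  ring_nf
  linear_combination ((b : ℂ)) ^ 2 * Complex.I_sq

end Aux

/-- For the vari-veryational circuit `V(x;θ) = ∏_{j=1}^L (Ũ(x) ⊗ R_X(θⱼ))` with
`1 ≤ L < 2^t` and observable `M = Z₁ ⊗ I ⊗ Z`,
`f_θ(x) = ⟨0|V†(x;θ) M V(x;θ)|0⟩ = Q(x)·cos(Σⱼθⱼ)` where
`Q(x) = ⟨0|U†(x) Z₁ U(x)|0⟩`. -/
theorem stmt_16 {d t : ℕ} (U Z₁ : Matrix (Fin d) (Fin d) ℂ)
    (hU : U ∈ Matrix.unitaryGroup (Fin d) ℂ) (hZ : Z₁.IsHermitian)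
    (ψ₀ : Fin d → ℂ) (hψ₀ : star ψ₀ ⬝ᵥ ψ₀ = 1)
    (L : ℕ) (θ : Fin L → ℝ) (hL1 : 1 ≤ L) (hL2 : L < 2 ^ t) :
    let Vc : Matrix ((Fin d × ZMod (2 ^ t)) × Fin 2)
        ((Fin d × ZMod (2 ^ t)) × Fin 2) ℂ :=
      (List.ofFn fun j : Fin L => (ctrlU t U) ⊗ₖ RX (θ j)).prod
    let Mobs : Matrix ((Fin d × ZMod (2 ^ t)) × Fin 2)
        ((Fin d × ZMod (2 ^ t)) × Fin 2) ℂ :=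
      (Z₁ ⊗ₖ (1 : Matrix (ZMod (2 ^ t)) (ZMod (2 ^ t)) ℂ)) ⊗ₖ !![1, 0; 0, -1]
    let v₀ : (Fin d × ZMod (2 ^ t)) × Fin 2 → ℂ :=
      fun p => ψ₀ p.1.1 * (if p.1.2 = 0 then 1 else 0) * (if p.2 = 0 then 1 else 0)
    star v₀ ⬝ᵥ ((Vcᴴ * Mobs * Vc).mulVec v₀) =
      (star ψ₀ ⬝ᵥ ((Uᴴ * Z₁ * U).mulVec ψ₀)) * (Real.cos (∑ j, θ j) : ℂ) := by
  intro Vc Mobs v₀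
  set Θ := ∑ j, θ j with hΘ
  -- the circuit factorizes as a Kronecker product
  have hVc : Vc = ((ctrlU t U) ^ L) ⊗ₖ RX Θ := by
    show (List.ofFn fun j : Fin L => (ctrlU t U) ⊗ₖ RX (θ j)).prod = _
    have : (List.ofFn fun j : Fin L => (ctrlU t U) ⊗ₖ RX (θ j)) =
        (List.ofFn fun j : Fin L => RX (θ j)).map fun B => (ctrlU t U) ⊗ₖ B := by
      rw [List.map_ofFn]; rfl
    rw [this, kron_list_prod, List.length_ofFn, prod_RX]
  -- notation for the factorized pieces
  set g : Fin d × ZMod (2 ^ t) → ℂ :=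
    fun q => ψ₀ q.1 * if q.2 = 0 then 1 else 0 with hg
  set e0 : Fin 2 → ℂ := fun s => if s = 0 then 1 else 0 with he0
  have hv₀ : v₀ = fun p => g p.1 * e0 p.2 := rfl
  set φ : Fin d → ℂ := U.mulVec ψ₀ with hφ
  set G : Fin d × ZMod (2 ^ t) → ℂ :=
    fun q => φ q.1 * if q.2 = (L : ZMod (2 ^ t)) then 1 else 0 with hG
  set r : Fin 2 → ℂ := (RX Θ).mulVec e0 with hr
  have hw : Vc.mulVec v₀ = fun p => G p.1 * r p.2 := by
    rw [hv₀, hVc, kron_mulVec, ctrl_pow U ψ₀ L hL1 (le_of_lt hL2)]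
  set eL : ZMod (2 ^ t) → ℂ :=
    fun k => if k = (L : ZMod (2 ^ t)) then 1 else 0 with heL
  have hG' : G = fun q => φ q.1 * eL q.2 := rfl
  -- apply the observable
  have hMw : Mobs.mulVec (fun p => G p.1 * r p.2) =
      fun p => ((Z₁ ⊗ₖ (1 : Matrix (ZMod (2 ^ t)) (ZMod (2 ^ t)) ℂ)).mulVec G) p.1 *
        ((!![1, 0; 0, -1] : Matrix (Fin 2) (Fin 2) ℂ).mulVec r) p.2 :=
    kron_mulVec _ _ _ _
  have hZG : (Z₁ ⊗ₖ (1 : Matrix (ZMod (2 ^ t)) (ZMod (2 ^ t)) ℂ)).mulVec G =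
      fun q => Z₁.mulVec φ q.1 * eL q.2 := by
    rw [hG', kron_mulVec, Matrix.one_mulVec]
  -- move the adjoint to the left vector
  have key : star v₀ ⬝ᵥ ((Vcᴴ * Mobs * Vc).mulVec v₀) =
      star (Vc.mulVec v₀) ⬝ᵥ (Mobs.mulVec (Vc.mulVec v₀)) := by
    rw [← Matrix.mulVec_mulVec, ← Matrix.mulVec_mulVec,
      Matrix.dotProduct_mulVec, ← Matrix.star_mulVec]
  have heLdot : star eL ⬝ᵥ eL = 1 := by
    simp [heL, dotProduct, apply_ite, Finset.sum_ite_eq']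
  have hQ : star ψ₀ ⬝ᵥ ((Uᴴ * Z₁ * U).mulVec ψ₀) = star φ ⬝ᵥ Z₁.mulVec φ := by
    rw [← Matrix.mulVec_mulVec, ← Matrix.mulVec_mulVec,
      Matrix.dotProduct_mulVec, ← Matrix.star_mulVec, hφ]
  rw [key, hw, hMw,
    dot_factor G ((Z₁ ⊗ₖ (1 : Matrix (ZMod (2 ^ t)) (ZMod (2 ^ t)) ℂ)).mulVec G) r
      ((!![1, 0; 0, -1] : Matrix (Fin 2) (Fin 2) ℂ).mulVec r),
    hZG, hG',
    dot_factor φ (Z₁.mulVec φ) eL eL,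
    heLdot, mul_one, hr, he0, qubit_factor, hQ]
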